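/- If there exists a doubly even self-dual binary code of length n, then n is divisible by 8. -/

import Mathlib

/-- The dual code of a binary linear code. -/
def dualCode {ι : Type*} [Fintype ι] (C : Submodule (ZMod 2) (ι → ZMod 2)) :
    Submodule (ZMod 2) (ι → ZMod 2) where
  carrier := {x | ∀ y ∈ C, ∑ i, x i * y i = 0}
  add_mem' := fun ha hb y hy => by
    simp only [Set.mem_setOf_eq] at *
    simp only [Pi.add_apply, add_mul, Finset.sum_add_distrib, ha y hy, hb y hy, add_zero]
  zero_mem' := fun y hy => by simp
  smul_mem' := fun c x hx y hy => by
    simp only [Set.mem_setOf_eq] at *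
    simp only [Pi.smul_apply, smul_eq_mul, mul_assoc, ← Finset.mul_sum, hx y hy, mul_zero]

/-- The support of a binary vector. -/
def supp {ι : Type*} [Fintype ι] (x : ι → ZMod 2) : Finset ι :=
  Finset.univ.filter fun i => x i ≠ 0

/-- The (Hamming) weight of a binary vector. -/
def wt {ι : Type*} [Fintype ι] (x : ι → ZMod 2) : ℕ := (supp x).card

/-!
Evaluate `∑_{y ∈ C} ∑_x i ^ wt x * (-1) ^ (x ⬝ᵥ y)` in two ways. Summing over `y` first,
orthogonality of characters leaves `|C| * ∑_{x ∈ C^⊥} i ^ wt x`; summing over `x` first, the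
inner sum factors over the coordinates as `(1 + i) ^ n * (-i) ^ wt y`. For a doubly even
self-dual code both weight sums equal `|C|`, so `|C| = (1 + i) ^ n`. Since `(1 + i) ^ 8 = 16`
and `(1 + i) ^ r` is a nonnegative real for `0 ≤ r < 8` only when `r = 0`, this forces `8 ∣ n`.
-/

open Complex Finset Matrix

lemma zmod_two_eq_zero_or_one (a : ZMod 2) : a = 0 ∨ a = 1 := by
  revert a; decide

lemma sum_zmod_two {M : Type*} [AddCommMonoid M] (f : ZMod 2 → M) : ∑ a, f a = f 0 + f 1 :=
  Fin.sum_univ_two f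

noncomputable def signChar : AddChar (ZMod 2) ℂ where
  toFun a := (-1) ^ a.val
  map_zero_eq_one' := pow_zero _
  map_add_eq_mul' a b := by rw [ZMod.val_add, ← neg_one_pow_eq_pow_mod_two, pow_add]

lemma signChar_apply (a : ZMod 2) : signChar a = (-1) ^ a.val := rfl

lemma signChar_eq_one_iff (a : ZMod 2) : signChar a = 1 ↔ a = 0 := by
  rcases zmod_two_eq_zero_or_one a with rfl | rfl <;> norm_num [signChar_apply, ZMod.val_one]

lemma AddChar.map_sum_eq_prod {ι A M : Type*} [AddCommMonoid A] [CommMonoid M]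
    (ψ : AddChar A M) (s : Finset ι) (f : ι → A) :
    ψ (∑ i ∈ s, f i) = ∏ i ∈ s, ψ (f i) := by
  induction s using Finset.cons_induction with
  | empty => simp
  | cons i s hi ih => rw [sum_cons, prod_cons, AddChar.map_add_eq_mul, ih]

variable {ι : Type*} [Fintype ι]

lemma mem_dualCode {C : Submodule (ZMod 2) (ι → ZMod 2)} {x : ι → ZMod 2} :
    x ∈ dualCode C ↔ ∀ y ∈ C, x ⬝ᵥ y = 0 := Iff.rfl

lemma wt_eq_sum_val (x : ι → ZMod 2) : wt x = ∑ i, (x i).val := by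
  rw [wt, supp, card_filter]
  refine sum_congr rfl fun i _ => ?_
  rcases zmod_two_eq_zero_or_one (x i) with h | h <;> simp [h, ZMod.val_one]

lemma sum_signChar_dotProduct (C : Submodule (ZMod 2) (ι → ZMod 2)) [Fintype C]
    [DecidablePred (· ∈ dualCode C)] (x : ι → ZMod 2) :
    ∑ y : C, signChar (x ⬝ᵥ y) = if x ∈ dualCode C then (Fintype.card C : ℂ) else 0 := by
  let ψ : AddChar C ℂ := signChar.compAddMonoidHom
    { toFun := fun y => x ⬝ᵥ y
      map_zero' := dotProduct_zero x
      map_add' := fun y z => dotProduct_add x y z }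
  have hψ : ψ = 0 ↔ x ∈ dualCode C := by
    simp [AddChar.eq_zero_iff, ψ, signChar_eq_one_iff, mem_dualCode]
  change ∑ y, ψ y = _
  rw [ψ.sum_eq_ite]
  exact if_congr hψ rfl rfl

lemma sum_I_pow_val_mul_signChar (b : ZMod 2) :
    ∑ a : ZMod 2, I ^ a.val * signChar (a * b) = (1 + I) * (-I) ^ b.val := by
  rw [sum_zmod_two]
  rcases zmod_two_eq_zero_or_one b with rfl | rfl
  · simp [ZMod.val_one]
  · simp [signChar_apply, ZMod.val_one]
    linear_combination I_mul_I

lemma sum_I_pow_wt_mul_signChar [DecidableEq ι] (y : ι → ZMod 2) :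
    ∑ x : ι → ZMod 2, I ^ wt x * signChar (x ⬝ᵥ y) = (1 + I) ^ Fintype.card ι * (-I) ^ wt y := by
  calc ∑ x : ι → ZMod 2, I ^ wt x * signChar (x ⬝ᵥ y)
      = ∑ x : ι → ZMod 2, ∏ i, I ^ (x i).val * signChar (x i * y i) := by
        refine sum_congr rfl fun x _ => ?_
        rw [prod_mul_distrib, prod_pow_eq_pow_sum, ← wt_eq_sum_val, ← AddChar.map_sum_eq_prod]
        rfl
    _ = ∏ i, ∑ a : ZMod 2, I ^ a.val * signChar (a * y i) := by
        rw [Fintype.prod_sum]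
    _ = ∏ i, (1 + I) * (-I) ^ (y i).val := by simp only [sum_I_pow_val_mul_signChar]
    _ = (1 + I) ^ Fintype.card ι * (-I) ^ wt y := by
        rw [prod_mul_distrib, prod_const, card_univ, prod_pow_eq_pow_sum, wt_eq_sum_val]

/-- The MacWilliams identity at `(x, y) = (1, i)`, using `(1 - i) / (1 + i) = -i`. -/
lemma card_mul_sum_I_pow_wt_dualCode (C : Submodule (ZMod 2) (ι → ZMod 2)) [Fintype C]
    [Fintype (dualCode C)] :
    (Fintype.card C : ℂ) * ∑ x : dualCode C, I ^ wt (x : ι → ZMod 2)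
      = (1 + I) ^ Fintype.card ι * ∑ y : C, (-I) ^ wt (y : ι → ZMod 2) := by
  classical
  calc (Fintype.card C : ℂ) * ∑ x : dualCode C, I ^ wt (x : ι → ZMod 2)
      = ∑ x with x ∈ dualCode C, I ^ wt x * Fintype.card C := by
        rw [sum_subtype _ (fun x => mem_filter_univ x), mul_comm, sum_mul]
    _ = ∑ x : ι → ZMod 2, I ^ wt x * ∑ y : C, signChar (x ⬝ᵥ y) := by
        rw [sum_filter]
        simp only [sum_signChar_dotProduct, mul_ite, mul_zero]
    _ = ∑ y : C, ∑ x : ι → ZMod 2, I ^ wt x * signChar (x ⬝ᵥ y) := by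
        simp only [mul_sum]; exact sum_comm
    _ = (1 + I) ^ Fintype.card ι * ∑ y : C, (-I) ^ wt (y : ι → ZMod 2) := by
        simp only [sum_I_pow_wt_mul_signChar, mul_sum]

lemma sum_pow_wt_eq_card_of_four_dvd (C : Submodule (ZMod 2) (ι → ZMod 2)) [Fintype C] {z : ℂ}
    (hz : z ^ 4 = 1) (h4 : ∀ x ∈ C, 4 ∣ wt x) :
    ∑ x : C, z ^ wt (x : ι → ZMod 2) = Fintype.card C := by
  have hx : ∀ x : C, z ^ wt (x : ι → ZMod 2) = 1 := fun x => by
    obtain ⟨k, hk⟩ := h4 x x.2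
    rw [hk, pow_mul, hz, one_pow]
  simp [hx]

lemma card_eq_one_add_I_pow_of_eq_dualCode (C : Submodule (ZMod 2) (ι → ZMod 2)) [Fintype C]
    (hC : C = dualCode C) (h4 : ∀ x ∈ C, 4 ∣ wt x) :
    (Fintype.card C : ℂ) = (1 + I) ^ Fintype.card ι := by
  let e : C ≃ dualCode C := Equiv.subtypeEquivRight fun x => by rw [← hC]
  have : Fintype (dualCode C) := Fintype.ofEquiv C e
  have key := card_mul_sum_I_pow_wt_dualCode C
  rw [sum_pow_wt_eq_card_of_four_dvd C (by rw [neg_pow, I_pow_four]; norm_num) h4,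
    sum_pow_wt_eq_card_of_four_dvd (dualCode C) I_pow_four (hC ▸ h4),
    Fintype.card_congr e.symm] at key
  exact mul_right_cancel₀ (Nat.cast_ne_zero.mpr Fintype.card_ne_zero) key

lemma eight_dvd_of_one_add_I_pow_eq_natCast {n M : ℕ} (h : (1 + I) ^ n = M) : 8 ∣ n := by
  have h8 : (1 + I) ^ 8 = 16 := by
    have : (1 + I) ^ 2 = 2 * I := by linear_combination I_mul_I
    rw [show 8 = 2 * 4 by rfl, pow_mul, this, mul_pow, I_pow_four]
    norm_num
  rw [← Nat.div_add_mod n 8, pow_add, pow_mul, h8] at h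
  have hr : (1 + I) ^ (n % 8) = ((M / 16 ^ (n / 8) : ℝ) : ℂ) := by
    push_cast
    rw [← h]
    field_simp
  have hre : 0 ≤ ((1 + I) ^ (n % 8)).re := by rw [hr, ofReal_re]; positivity
  have him : ((1 + I) ^ (n % 8)).im = 0 := by rw [hr, ofReal_im]
  have hlt : n % 8 < 8 := Nat.mod_lt n (by norm_num)
  refine Nat.dvd_of_mod_eq_zero ?_
  by_contra hne
  interval_cases n % 8 <;> norm_num [pow_succ] at *

/-- If there exists a doubly even self-dual binary code of length `n`,
then `8 ∣ n`. -/
theorem stmt_2 {n : ℕ}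
    (h : ∃ C : Submodule (ZMod 2) (Fin n → ZMod 2),
      C = dualCode C ∧ ∀ x ∈ C, 4 ∣ wt x) :
    8 ∣ n := by
  classical
  obtain ⟨C, hC, h4⟩ := h
  have hcard := card_eq_one_add_I_pow_of_eq_dualCode C hC h4
  rw [Fintype.card_fin] at hcard
  exact eight_dvd_of_one_add_I_pow_eq_natCast hcard.symm
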